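/- arXiv:2309.14229 — 7 statements merged into one kernel-verified Lean document; each statement's English description precedes it below -/
import Mathlib

section
/- Let D be a finite set, m ≥ 2, and X_1,…,X_m random variables taking values in D. If the total variation distance TV(X_i,X_j) = Σ_{d∈D} |P(X_i=d) − P(X_j=d)| is at most η for all pairs i<j, then Σ_{d∈D} P(X_1=d)⋯P(X_m=d) − 1/|D|^{m−1} ≥ −|D|^{m−2}·η (assuming |D|·η ≤ 1). -/
/-!
Compare every `X_i` with `X_1`. Pointwise, `∏ᵢ P(X_i = d) ≥ P(X_1 = d)^m − ∑ᵢ |P(X_i = d) − P(X_1 = d)|`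
since all probabilities lie in `[0, 1]`; summing over `d`, the error terms add up to at most
`(m − 1)·η ≤ |D|^{m−2}·η` (for `|D| = 1` all the `X_i` coincide and they vanish), while
the power mean inequality gives `∑_d P(X_1 = d)^m ≥ 1/|D|^{m−1}`.
-/

open Finset

lemma abs_prod_sub_prod_le_sum_abs_sub {ι : Type*} (s : Finset ι) {a b : ι → ℝ}
    (ha₀ : ∀ i ∈ s, 0 ≤ a i) (ha₁ : ∀ i ∈ s, a i ≤ 1)
    (hb₀ : ∀ i ∈ s, 0 ≤ b i) (hb₁ : ∀ i ∈ s, b i ≤ 1) :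
    |∏ i ∈ s, a i - ∏ i ∈ s, b i| ≤ ∑ i ∈ s, |a i - b i| := by
  classical
  induction s using Finset.induction_on with
  | empty => simp
  | insert j s hj ih =>
    simp only [mem_insert, forall_eq_or_imp] at ha₀ ha₁ hb₀ hb₁
    rw [prod_insert hj, prod_insert hj, sum_insert hj]
    have hA : |∏ i ∈ s, a i| ≤ 1 := by
      rw [abs_of_nonneg (prod_nonneg ha₀.2)]
      exact prod_le_one ha₀.2 ha₁.2
    have hb : |b j| ≤ 1 := by rw [abs_of_nonneg hb₀.1]; exact hb₁.1
    calc |a j * ∏ i ∈ s, a i - b j * ∏ i ∈ s, b i|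
        = |(a j - b j) * ∏ i ∈ s, a i + b j * (∏ i ∈ s, a i - ∏ i ∈ s, b i)| := by ring_nf
      _ ≤ |a j - b j| * |∏ i ∈ s, a i| + |b j| * |∏ i ∈ s, a i - ∏ i ∈ s, b i| := by
        rw [← abs_mul, ← abs_mul]; exact abs_add_le _ _
      _ ≤ |a j - b j| * 1 + 1 * ∑ i ∈ s, |a i - b i| := by
        gcongr
        exact ih ha₀.2 ha₁.2 hb₀.2 hb₁.2
      _ = _ := by ring

section ProbabilityVectors

variable {ι D : Type*} [Fintype ι] [Fintype D] {P : ι → D → ℝ}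

lemma le_one_of_sum_eq_one {p : D → ℝ} (hp₀ : ∀ d, 0 ≤ p d) (hp₁ : ∑ d, p d = 1) (d : D) :
    p d ≤ 1 :=
  hp₁ ▸ single_le_sum (fun d _ => hp₀ d) (mem_univ d)

lemma eq_one_of_sum_eq_one [Subsingleton D] {p : D → ℝ} (hp₁ : ∑ d, p d = 1) (d : D) :
    p d = 1 := by
  rwa [Fintype.sum_subsingleton _ d] at hp₁

lemma one_div_card_pow_le_sum_pow {p : D → ℝ} (hp₀ : ∀ d, 0 ≤ p d) (hp₁ : ∑ d, p d = 1)
    (n : ℕ) : 1 / (Fintype.card D : ℝ) ^ n ≤ ∑ d, p d ^ (n + 1) := by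
  simpa [hp₁, card_univ] using pow_sum_div_card_le_sum_pow (s := univ) (fun d _ => hp₀ d) n

lemma sum_sum_abs_sub_le (j : ι) {η : ℝ} (hTV : ∀ i ≠ j, ∑ d, |P i d - P j d| ≤ η) :
    ∑ i, ∑ d, |P i d - P j d| ≤ ((Fintype.card ι : ℝ) - 1) * η := by
  classical
  rw [← add_sum_erase _ _ (mem_univ j)]
  simp only [sub_self, abs_zero, sum_const_zero, zero_add]
  calc ∑ i ∈ univ.erase j, ∑ d, |P i d - P j d| ≤ ∑ _i ∈ univ.erase j, η :=
        sum_le_sum fun i hi => hTV i (ne_of_mem_erase hi)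
    _ = _ := by
      rw [sum_const, card_erase_of_mem (mem_univ j), card_univ, nsmul_eq_mul,
        Nat.cast_pred (Fintype.card_pos_iff.mpr ⟨j⟩)]

lemma one_div_card_pow_sub_le_sum_prod (hP₀ : ∀ i d, 0 ≤ P i d) (hP₁ : ∀ i, ∑ d, P i d = 1)
    (j : ι) :
    1 / (Fintype.card D : ℝ) ^ (Fintype.card ι - 1) - ∑ i, ∑ d, |P i d - P j d| ≤
      ∑ d, ∏ i, P i d := by
  have hcard : Fintype.card ι - 1 + 1 = Fintype.card ι := Nat.sub_add_cancel (Fintype.card_pos_iff.mpr ⟨j⟩)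
  have hpow := one_div_card_pow_le_sum_pow (hP₀ j) (hP₁ j) (Fintype.card ι - 1)
  rw [hcard] at hpow
  have hpoint : ∀ d, P j d ^ Fintype.card ι - ∑ i, |P i d - P j d| ≤ ∏ i, P i d := fun d => by
    have := abs_prod_sub_prod_le_sum_abs_sub univ (a := fun i => P i d) (b := fun _ => P j d)
      (fun i _ => hP₀ i d) (fun i _ => le_one_of_sum_eq_one (hP₀ i) (hP₁ i) d)
      (fun _ _ => hP₀ j d) (fun _ _ => le_one_of_sum_eq_one (hP₀ j) (hP₁ j) d)
    rw [prod_const, card_univ] at this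
    linarith [neg_abs_le (∏ i, P i d - P j d ^ Fintype.card ι)]
  have hsum := sum_le_sum fun d (_ : d ∈ univ) => hpoint d
  rw [sum_sub_distrib, sum_comm] at hsum
  linarith

end ProbabilityVectors

lemma natCast_add_one_le_pow_of_two_le {c : ℝ} (hc : 2 ≤ c) (k : ℕ) : (k : ℝ) + 1 ≤ c ^ k := by
  have := one_add_mul_le_pow (a := c - 1) (by linarith) k
  rw [add_sub_cancel] at this
  nlinarith [k.cast_nonneg (α := ℝ)]

theorem stmt_0_general {D : Type*} [Fintype D] (m : ℕ) (hm : 2 ≤ m)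
    (P : Fin m → D → ℝ) (hP0 : ∀ i d, 0 ≤ P i d)
    (hP1 : ∀ i, ∑ d, P i d = 1) (η : ℝ)
    (hTV : ∀ i j : Fin m, i < j → ∑ d, |P i d - P j d| ≤ η) :
    (∑ d, ∏ i, P i d) - 1 / (Fintype.card D : ℝ) ^ (m - 1) ≥
      -((Fintype.card D : ℝ) ^ (m - 2) * η) := by
  obtain ⟨k, rfl⟩ : ∃ k, m = k + 2 := ⟨m - 2, by omega⟩
  have hη : 0 ≤ η := (sum_nonneg fun d _ => abs_nonneg _).trans (hTV 0 1 Fin.zero_lt_one)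
  have hdev : ∑ i, ∑ d, |P i d - P 0 d| ≤ (Fintype.card D : ℝ) ^ k * η := by
    rcases lt_or_ge (Fintype.card D) 2 with hD | hD
    · have : Subsingleton D := Fintype.card_le_one_iff_subsingleton.mp (by omega)
      simp only [eq_one_of_sum_eq_one (hP1 _), sub_self, abs_zero, sum_const_zero]
      positivity
    · have hTV₀ : ∀ i ≠ 0, ∑ d, |P i d - P 0 d| ≤ η := fun i hi => by
        rw [sum_congr rfl fun d _ => abs_sub_comm _ _]
        exact hTV 0 i (Fin.pos_iff_ne_zero.mpr hi)
      calc ∑ i, ∑ d, |P i d - P 0 d| ≤ ((Fintype.card (Fin (k + 2)) : ℝ) - 1) * η :=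
            sum_sum_abs_sub_le 0 hTV₀
        _ = ((k : ℝ) + 1) * η := by rw [Fintype.card_fin]; push_cast; ring
        _ ≤ _ := by gcongr; exact natCast_add_one_le_pow_of_two_le (by exact_mod_cast hD) k
  have hmain := one_div_card_pow_sub_le_sum_prod hP0 hP1 0
  rw [Fintype.card_fin] at hmain
  simp only [Nat.add_sub_cancel, ge_iff_le] at hmain ⊢
  linarith

/-- If the pairwise total variation distances between the distributions of
`X_1, …, X_m` on a finite set `D` are all at most `η`, then the correlation
`∑_d P(X_1=d)⋯P(X_m=d) − 1/|D|^{m−1}` is at least `−|D|^{m−2}·η`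
(assuming `|D|·η ≤ 1`). -/
theorem stmt_0 {D : Type*} [Fintype D] (m : ℕ) (hm : 2 ≤ m)
    (P : Fin m → D → ℝ) (hP0 : ∀ i d, 0 ≤ P i d)
    (hP1 : ∀ i, ∑ d, P i d = 1) (η : ℝ)
    (hTV : ∀ i j : Fin m, i < j → ∑ d, |P i d - P j d| ≤ η)
    (hη : (Fintype.card D : ℝ) * η ≤ 1) :
    (∑ d, ∏ i, P i d) - 1 / (Fintype.card D : ℝ) ^ (m - 1) ≥
      -((Fintype.card D : ℝ) ^ (m - 2) * η) :=
  stmt_0_general m hm P hP0 hP1 η hTV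
end

section
/- Let D be a finite set, m ≥ 2, and X_1,…,X_m random variables taking values in D. If cor(X_1,…,X_m) = (Σ_{d∈D} P(X_1=d)⋯P(X_m=d)) − 1/|D|^{m−1} ≥ −ν, then the overlap ω(X_1,…,X_m) = Σ_{d∈D} min(P(X_1=d),…,P(X_m=d)) satisfies ω(X_1,…,X_m) ≥ 1/|D|^m − ν/|D|. -/
/-!
Since every `P i d` lies in `[0, 1]`, the product `∏ i, P i d` is at most `min_i P i d`, so the
overlap dominates `∑ d, ∏ i, P i d ≥ 1 / |D| ^ (m - 1) - ν`. Dividing this bound by `|D| ≥ 1`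
only weakens it, because the overlap is nonnegative.
-/

open Finset

theorem Finset.prod_le_inf'_of_le_one {ι R : Type*} [CommSemiring R] [LinearOrder R]
    [IsOrderedRing R] {s : Finset ι} (hs : s.Nonempty) {f : ι → R}
    (h0 : ∀ i ∈ s, 0 ≤ f i) (h1 : ∀ i ∈ s, f i ≤ 1) :
    ∏ i ∈ s, f i ≤ s.inf' hs f := by
  classical
  refine le_inf' hs _ fun i hi => ?_
  calc ∏ j ∈ s, f j = f i * ∏ j ∈ s.erase i, f j := (mul_prod_erase s f hi).symm
    _ ≤ f i * 1 := by
        gcongr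
        · exact h0 i hi
        · exact prod_le_one (fun j hj => h0 j (mem_of_mem_erase hj))
            (fun j hj => h1 j (mem_of_mem_erase hj))
    _ = f i := mul_one _

theorem div_le_of_le_of_one_le {K : Type*} [Field K] [LinearOrder K] [IsStrictOrderedRing K]
    {a x c : K} (hx : 0 ≤ x) (hax : a ≤ x) (hc : 1 ≤ c) : a / c ≤ x := by
  rcases le_total a 0 with ha | ha
  · exact (div_nonpos_of_nonpos_of_nonneg ha (zero_le_one.trans hc)).trans hx
  · exact (div_le_self ha hc).trans hax

/-- If `cor(X_1,…,X_m) ≥ −ν`, then the overlap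
`∑_d min_i P(X_i=d)` is at least `1/|D|^m − ν/|D|`. -/
theorem stmt_1 {D : Type*} [Fintype D] (m : ℕ) (hm : 2 ≤ m)
    (P : Fin m → D → ℝ) (hP0 : ∀ i d, 0 ≤ P i d)
    (hP1 : ∀ i, ∑ d, P i d = 1) (ν : ℝ)
    (hcor : (∑ d, ∏ i, P i d) - 1 / (Fintype.card D : ℝ) ^ (m - 1) ≥ -ν) :
    ∑ d, (Finset.univ.inf' ⟨⟨0, by omega⟩, Finset.mem_univ _⟩ fun i => P i d) ≥
      1 / (Fintype.card D : ℝ) ^ m - ν / (Fintype.card D : ℝ) := by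
  set c : ℝ := (Fintype.card D : ℝ)
  have hPle1 (i : Fin m) (d : D) : P i d ≤ 1 :=
    hP1 i ▸ single_le_sum (fun d' _ => hP0 i d') (mem_univ d)
  have hD : Nonempty D := by
    by_contra hD
    simpa [not_nonempty_iff.mp hD] using hP1 ⟨0, by omega⟩
  have hc : 1 ≤ c := Nat.one_le_cast.mpr Fintype.card_pos
  have hprod : ∑ d, ∏ i, P i d ≤
      ∑ d, (Finset.univ.inf' ⟨⟨0, by omega⟩, Finset.mem_univ _⟩ fun i => P i d) :=
    sum_le_sum fun d _ =>
      prod_le_inf'_of_le_one _ (fun i _ => hP0 i d) (fun i _ => hPle1 i d)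
  have hsplit : 1 / c ^ m - ν / c = (1 / c ^ (m - 1) - ν) / c := by
    have hc0 : c ≠ 0 := by positivity
    rw [← Nat.sub_add_cancel (by omega : 1 ≤ m), pow_succ, Nat.add_sub_cancel]
    field_simp
  rw [ge_iff_le, hsplit]
  exact div_le_of_le_of_one_le
    (sum_nonneg fun d _ => le_inf' _ _ fun i _ => hP0 i d) (by linarith) hc
end

section
/- Let p be a prime, k ≥ 1 an integer, and φ_1,…,φ_k : F_p^n → F_p be linear forms. Then for every (y_1,…,y_k) ∈ F_p^k, the probability, for x chosen uniformly at random from {0,1}^n ⊂ F_p^n, of the event φ_1(x)=y_1, …, φ_k(x)=y_k, is either 0 or at least 2^{−k(p−1)}. -/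
/-!
Encode `x ∈ {0,1}^n` by its support `S`; then `φ(x) = ∑_{j ∈ S} v_j` with `v_j = (φ_i(e_j))_i`,
so we count subsets of `Fin n` whose `v`-sum is `y`. By Chevalley–Warning, every family of
more than `d = k(p-1)` vectors of `F_p^k` has a nonempty zero-sum subfamily. Given a solution
`T ⊆ A` with `|A| > d`, a zero-sum subfamily `S` of the signed vectors `±v_j` (minus sign on
`T`) gives a second solution `T ∆ S`. A coordinate `j` on which the two solutions differ splits
the solutions into two solvable problems on `A \ {j}`, so by induction a solvable problem on
`A` has at least `2^(|A|-d)` solutions.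
-/

open Finset MvPolynomial

theorem sum_mul_pow_sub_one_eq_sum_filter_ne_zero {p : ℕ} [Fact p.Prime] {ι : Type*}
    (s : Finset ι) (c x : ι → ZMod p) :
    ∑ j ∈ s, c j * x j ^ (p - 1) = ∑ j ∈ s with x j ≠ 0, c j := by
  rw [sum_filter]
  refine sum_congr rfl fun j _ => ?_
  by_cases hj : x j = 0
  · simp [hj, zero_pow (Nat.sub_ne_zero_of_lt (Fact.out : p.Prime).one_lt)]
  · simp [hj, ZMod.pow_card_sub_one_eq_one hj]

theorem exists_nonempty_subset_sum_eq_zero {p : ℕ} [Fact p.Prime] {ι σ : Type*} [Fintype σ]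
    (w : ι → σ → ZMod p) (A : Finset ι) (hA : Fintype.card σ * (p - 1) < #A) :
    ∃ S ⊆ A, S.Nonempty ∧ ∑ j ∈ S, w j = 0 := by
  classical
  let f : σ → MvPolynomial A (ZMod p) := fun i => ∑ j : A, C (w j i) * X j ^ (p - 1)
  have hdeg : ∑ i, (f i).totalDegree < Fintype.card A := by
    calc ∑ i, (f i).totalDegree ≤ ∑ _i : σ, (p - 1) := by
          refine sum_le_sum fun i _ => (totalDegree_finsetSum _ _).trans ?_
          refine Finset.sup_le fun j _ => ?_
          exact (totalDegree_mul _ _).trans (by simp [totalDegree_X_pow])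
      _ < Fintype.card A := by simpa [mul_comm] using hA
  have hzero : ∀ i, eval 0 (f i) = 0 := fun i => by
    simp [f, Nat.sub_ne_zero_of_lt (Fact.out : p.Prime).one_lt]
  -- The number of common zeros is divisible by `p` and positive, hence at least `2`.
  obtain ⟨x, hx⟩ := Fintype.exists_ne_of_one_lt_card
    ((Fact.out : p.Prime).one_lt.trans_le (Nat.le_of_dvd (Fintype.card_pos_iff.2 ⟨⟨0, hzero⟩⟩)
      (char_dvd_card_solutions_of_fintype_sum_lt p hdeg))) ⟨0, hzero⟩
  obtain ⟨j, hj⟩ : ∃ j, x.1 j ≠ 0 := by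
    by_contra! h
    exact hx (Subtype.ext (funext h))
  refine ⟨(univ.filter (x.1 · ≠ 0)).map (Function.Embedding.subtype _), fun a ha => ?_,
    ⟨j, by simp [hj]⟩, funext fun i => ?_⟩
  · obtain ⟨b, -, rfl⟩ := mem_map.1 ha
    exact b.2
  · have := x.2 i
    simp only [f, map_sum, eval_mul, eval_C, eval_pow, eval_X,
      sum_mul_pow_sub_one_eq_sum_filter_ne_zero] at this
    simpa [Finset.sum_apply] using this

section SubsetSums

variable {ι G : Type*}

def subsetsWithSum [AddCommMonoid G] [DecidableEq G] (A : Finset ι) (v : ι → G) (y : G) :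
    Finset (Finset ι) :=
  A.powerset.filter fun S => ∑ j ∈ S, v j = y

theorem mem_subsetsWithSum [AddCommMonoid G] [DecidableEq G] {A S : Finset ι} {v : ι → G}
    {y : G} : S ∈ subsetsWithSum A v y ↔ S ⊆ A ∧ ∑ j ∈ S, v j = y := by
  simp [subsetsWithSum]

variable [DecidableEq ι] [AddCommGroup G]

theorem sum_symmDiff_eq_add (v : ι → G) (T S : Finset ι) :
    ∑ j ∈ symmDiff T S, v j = ∑ j ∈ T, v j + ∑ j ∈ S, if j ∈ T then -v j else v j := by
  rw [Finset.symmDiff_def, sum_union disjoint_sdiff_sdiff, sum_ite, filter_mem_eq_inter,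
    filter_notMem_eq_sdiff, sum_neg_distrib, ← sum_inter_add_sum_sdiff T S, inter_comm S T]
  abel

variable [DecidableEq G] {A : Finset ι} {v : ι → G} {y : G}

theorem card_subsetsWithSum_of_mem {j : ι} (hj : j ∈ A) :
    #(subsetsWithSum A v y) =
      #(subsetsWithSum (A.erase j) v y) + #(subsetsWithSum (A.erase j) v (y - v j)) := by
  simp only [subsetsWithSum, card_filter]
  conv_lhs => rw [← insert_erase hj]
  rw [sum_powerset_insert (notMem_erase j A)]
  congr 1
  refine sum_congr rfl fun S hS => ?_
  have hjS : j ∉ S := fun h => notMem_erase j A (mem_powerset.1 hS h)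
  simp only [sum_insert hjS, eq_sub_iff_add_eq']

theorem mem_subsetsWithSum_erase {S : Finset ι} {j : ι} (hS : S ∈ subsetsWithSum A v y)
    (hj : j ∉ S) : S ∈ subsetsWithSum (A.erase j) v y := by
  rw [mem_subsetsWithSum] at hS ⊢
  exact ⟨subset_erase.2 ⟨hS.1, hj⟩, hS.2⟩

theorem erase_mem_subsetsWithSum_erase {S : Finset ι} {j : ι} (hS : S ∈ subsetsWithSum A v y)
    (hj : j ∈ S) : S.erase j ∈ subsetsWithSum (A.erase j) v (y - v j) := by
  rw [mem_subsetsWithSum] at hS ⊢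
  exact ⟨erase_subset_erase j hS.1, by rw [eq_sub_iff_add_eq', add_sum_erase S v hj, hS.2]⟩

theorem exists_ne_mem_subsetsWithSum {d : ℕ}
    (hd : ∀ (w : ι → G) (A : Finset ι), d < #A → ∃ S ⊆ A, S.Nonempty ∧ ∑ j ∈ S, w j = 0)
    (hA : d < #A) {T : Finset ι} (hT : T ∈ subsetsWithSum A v y) :
    ∃ T' ∈ subsetsWithSum A v y, T' ≠ T := by
  obtain ⟨S, hSA, hS, hS0⟩ := hd (fun j => if j ∈ T then -v j else v j) A hA
  rw [mem_subsetsWithSum] at hT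
  refine ⟨symmDiff T S, mem_subsetsWithSum.2 ⟨?_, ?_⟩, ?_⟩
  · exact symmDiff_le_sup.trans (union_subset hT.1 hSA)
  · rw [sum_symmDiff_eq_add, hT.2, hS0, add_zero]
  · simpa [symmDiff_eq_left, ← bot_eq_empty] using hS.ne_empty

theorem two_pow_card_le_mul_card_subsetsWithSum {d : ℕ}
    (hd : ∀ (w : ι → G) (A : Finset ι), d < #A → ∃ S ⊆ A, S.Nonempty ∧ ∑ j ∈ S, w j = 0)
    (A : Finset ι) (y : G) (h : (subsetsWithSum A v y).Nonempty) :
    2 ^ #A ≤ 2 ^ d * #(subsetsWithSum A v y) := by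
  induction A using strongInduction generalizing y with
  | H A ih =>
  obtain ⟨T, hT⟩ := h
  by_cases hA : #A ≤ d
  · calc 2 ^ #A ≤ 2 ^ d * 1 := by rw [mul_one]; exact Nat.pow_le_pow_right two_pos hA
      _ ≤ _ := Nat.mul_le_mul_left _ (card_pos.2 ⟨T, hT⟩)
  obtain ⟨T', hT', hne⟩ := exists_ne_mem_subsetsWithSum hd (not_le.1 hA) hT
  obtain ⟨j, Tin, hin, Tout, hout, hjin, hjout⟩ : ∃ j, ∃ Tin ∈ subsetsWithSum A v y,
      ∃ Tout ∈ subsetsWithSum A v y, j ∈ Tin ∧ j ∉ Tout := by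
    obtain ⟨j, hj⟩ := not_forall.1 (mt Finset.ext hne)
    by_cases hjT : j ∈ T
    · exact ⟨j, T, hT, T', hT', hjT, by tauto⟩
    · exact ⟨j, T', hT', T, hT, by tauto, hjT⟩
  have hjA : j ∈ A := (mem_subsetsWithSum.1 hin).1 hjin
  have hlt := erase_ssubset hjA
  have h₁ := ih _ hlt y ⟨Tout, mem_subsetsWithSum_erase hout hjout⟩
  have h₂ := ih _ hlt (y - v j) ⟨_, erase_mem_subsetsWithSum_erase hin hjin⟩
  calc 2 ^ #A = 2 ^ #(A.erase j) + 2 ^ #(A.erase j) := by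
        rw [← two_mul, ← pow_succ', card_erase_add_one hjA]
    _ ≤ 2 ^ d * #(subsetsWithSum A v y) := by
        rw [card_subsetsWithSum_of_mem hjA, mul_add]; exact add_le_add h₁ h₂

end SubsetSums

theorem card_filter_fun_fin_two {ι : Type*} [Fintype ι] [DecidableEq ι] (P : Finset ι → Prop)
    [DecidablePred P] :
    #{x : ι → Fin 2 | P {j | x j = 1}} = #{S : Finset ι | P S} := by
  refine card_nbij' (fun x => ({j | x j = 1} : Finset ι)) (fun S j => if j ∈ S then 1 else 0)
    ?_ ?_ ?_ ?_
  · intro x hx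
    simpa using hx
  · intro S hS
    have hS' : ({j | (if j ∈ S then 1 else 0 : Fin 2) = 1} : Finset ι) = S := by
      ext j
      by_cases hj : j ∈ S <;> simp [hj]
    simpa [hS'] using hS
  · intro x _
    funext j
    simp only [mem_filter, mem_univ, true_and]
    generalize x j = b
    fin_cases b <;> rfl
  · intro S _
    ext j
    by_cases hj : j ∈ S <;> simp [hj]

theorem LinearMap.apply_natCast_fin_two {R M ι : Type*} [Semiring R] [AddCommMonoid M]
    [Module R M] [Fintype ι] [DecidableEq ι] (f : (ι → R) →ₗ[R] M) (x : ι → Fin 2) :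
    f (fun z => ((x z : ℕ) : R)) = ∑ j with x j = 1, f fun z => if j = z then 1 else 0 := by
  rw [f.pi_apply_eq_sum_univ, sum_filter]
  refine sum_congr rfl fun j _ => ?_
  generalize x j = b
  fin_cases b <;> simp

theorem stmt_4_general (p : ℕ) (hp : p.Prime) (n k : ℕ)
    (φ : Fin k → (Fin n → ZMod p) →ₗ[ZMod p] ZMod p) (y : Fin k → ZMod p) :
    ((Finset.univ.filter fun x : Fin n → Fin 2 =>
        ∀ i, φ i (fun z => ((x z : ℕ) : ZMod p)) = y i).card : ℝ) / 2 ^ n = 0 ∨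
    ((Finset.univ.filter fun x : Fin n → Fin 2 =>
        ∀ i, φ i (fun z => ((x z : ℕ) : ZMod p)) = y i).card : ℝ) / 2 ^ n ≥
      1 / 2 ^ (k * (p - 1)) := by
  have := Fact.mk hp
  classical
  set v : Fin n → Fin k → ZMod p := fun j i => φ i fun z => if j = z then 1 else 0
  have hcard : #{x : Fin n → Fin 2 | ∀ i, φ i (fun z => ((x z : ℕ) : ZMod p)) = y i} =
      #(subsetsWithSum univ v y) := by
    simp only [LinearMap.apply_natCast_fin_two]
    rw [card_filter_fun_fin_two fun S => ∀ i, ∑ j ∈ S, v j i = y i]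
    simp [subsetsWithSum, v, funext_iff, Finset.sum_apply]
  rcases (subsetsWithSum univ v y).eq_empty_or_nonempty with h | h
  · left
    simp [hcard, h]
  · right
    have key := two_pow_card_le_mul_card_subsetsWithSum
      (fun w A hA => exists_nonempty_subset_sum_eq_zero w A (by simpa using hA)) univ y h
    rw [card_univ, Fintype.card_fin] at key
    rw [hcard, ge_iff_le, div_le_div_iff₀ (by positivity) (by positivity), one_mul]
    exact_mod_cast key.trans_eq (mul_comm _ _)

/-- For linear forms `φ_1,…,φ_k : F_p^n → F_p` and any target values, the
probability over uniform `x ∈ {0,1}^n` of `φ_1(x)=y_1, …, φ_k(x)=y_k` is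
either `0` or at least `2^{−k(p−1)}`. -/
theorem stmt_4 (p : ℕ) (hp : p.Prime) (n k : ℕ) (hk : 1 ≤ k)
    (φ : Fin k → (Fin n → ZMod p) →ₗ[ZMod p] ZMod p) (y : Fin k → ZMod p) :
    ((Finset.univ.filter fun x : Fin n → Fin 2 =>
        ∀ i, φ i (fun z => ((x z : ℕ) : ZMod p)) = y i).card : ℝ) / 2 ^ n = 0 ∨
    ((Finset.univ.filter fun x : Fin n → Fin 2 =>
        ∀ i, φ i (fun z => ((x z : ℕ) : ZMod p)) = y i).card : ℝ) / 2 ^ n ≥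
      1 / 2 ^ (k * (p - 1)) :=
  stmt_4_general p hp n k φ y
end

section
/- Let p be a prime and n a positive integer. Let φ : F_p^n → F_p be a linear form whose support {z ∈ [n] : a_z ≠ 0} has size at least r. Then |E_{x ∈ {0,1}^n} ω_p^{φ(x)}| ≤ (1 − p^{−2})^{r/2}, where ω_p = e^{2πi/p}; in particular |P_{x ∈ {0,1}^n}[φ(x) = y] − 1/p| ≤ (1−p^{−2})^r for every y ∈ F_p. -/
/-!
Over the cube the exponential sum factors: `E_x ω^{φ(x)} = ∏_z (1 + ω^{a_z}) / 2`. For `a_z ≠ 0`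
the factor has modulus `|cos (π v / p)|` with `0 < v < p`, and Jordan's inequality
`sin (π v / p) ≥ 2 / p` bounds it by `√(1 - 4 / p²) ≤ 1 - p⁻²`. The fibre counts follow by Fourier
inversion on `F_p`: `p · P[φ = y] - 1 = ∑_{t ≠ 0} ω^{-t y} E_x ω^{t φ(x)}`, and `t φ` has the same
support as `φ`.
-/

open Complex Finset Real

theorem one_sub_inv_sq_mem_Icc {x : ℝ} (hx : 1 ≤ x) : 1 - (x⁻¹) ^ 2 ∈ Set.Icc 0 1 := by
  have h0 : 0 ≤ x⁻¹ := inv_nonneg.mpr (zero_le_one.trans hx)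
  have h1 : x⁻¹ ≤ 1 := inv_le_one_of_one_le₀ hx
  constructor <;> nlinarith

theorem AddChar.map_sum_eq_prod {A M ι : Type*} [AddCommMonoid A] [CommMonoid M]
    (ψ : AddChar A M) (s : Finset ι) (f : ι → A) : ψ (∑ i ∈ s, f i) = ∏ i ∈ s, ψ (f i) := by
  classical
  induction s using Finset.induction_on with
  | empty => simp
  | insert i s hi ih => rw [sum_insert hi, prod_insert hi, map_add_eq_mul, ih]

theorem AddChar.sum_cube_apply_linear_eq_prod {R S ι : Type*} [Semiring R] [CommSemiring S]
    [Fintype ι] [DecidableEq ι] (ψ : AddChar R S) (a : ι → R) :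
    ∑ x : ι → Fin 2, ψ (∑ z, a z * ((x z : ℕ) : R)) = ∏ z, (1 + ψ (a z)) := by
  simp_rw [ψ.map_sum_eq_prod, ← Fintype.prod_sum (fun z (j : Fin 2) => ψ (a z * ((j : ℕ) : R)))]
  simp [Fin.sum_univ_two]

theorem Real.two_div_le_sin_pi_mul_div {p v : ℕ} (hv : 0 < v) (hvp : v < p) :
    2 / p ≤ sin (π * v / p) := by
  have hp : (0 : ℝ) < p := by exact_mod_cast hv.trans hvp
  wlog hvp2 : 2 * v ≤ p generalizing v
  · have h := this (v := p - v) (by omega) (by omega) (by omega)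
    rwa [Nat.cast_sub hvp.le, mul_sub, sub_div, mul_div_cancel_right₀ _ hp.ne',
      sin_pi_sub] at h
  have hv1 : (1 : ℝ) ≤ v := by exact_mod_cast hv
  have hvp2' : 2 * (v : ℝ) ≤ p := by exact_mod_cast hvp2
  calc 2 / (p : ℝ) ≤ 2 / π * (π * v / p) := by
        rw [show 2 / π * (π * v / p) = 2 * v / p by field_simp]
        gcongr
        linarith
    _ ≤ sin (π * v / p) := by
        refine mul_le_sin (by positivity) ?_
        rw [div_le_div_iff₀ hp two_pos]
        nlinarith [pi_pos]

namespace ZMod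

variable {p : ℕ} [NeZero p]

theorem four_div_le_norm_stdAddChar_sub_one {b : ZMod p} (hb : b ≠ 0) :
    4 / p ≤ ‖stdAddChar b - 1‖ := by
  have hexp : stdAddChar b = exp (I * (2 * π * b.val / p : ℝ)) := by
    rw [stdAddChar_apply, toCircle_apply]
    push_cast
    ring_nf
  have hsin := two_div_le_sin_pi_mul_div (Nat.pos_of_ne_zero ((val_ne_zero b).mpr hb)) b.val_lt
  rw [hexp, norm_exp_I_mul_ofReal_sub_one,
    show (2 * π * b.val / p : ℝ) / 2 = π * b.val / p by ring, Real.norm_eq_abs]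
  exact le_abs.mpr (Or.inl (by rw [show (4 : ℝ) / p = 2 * (2 / p) by ring]; linarith))

theorem norm_one_add_stdAddChar_le {b : ZMod p} (hb : b ≠ 0) :
    ‖1 + stdAddChar b‖ ≤ 2 * (1 - ((p : ℝ)⁻¹) ^ 2) := by
  have hq0 := (one_sub_inv_sq_mem_Icc (x := p) (by exact_mod_cast NeZero.one_le)).1
  have hsub : (4 * (p : ℝ)⁻¹) ^ 2 ≤ ‖1 - stdAddChar b‖ ^ 2 := by
    rw [norm_sub_rev, ← div_eq_mul_inv]
    gcongr
    exact four_div_le_norm_stdAddChar_sub_one hb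
  have hpar := parallelogram_law_with_norm ℝ (1 : ℂ) (stdAddChar b)
  rw [norm_one, AddChar.norm_apply] at hpar
  refine (pow_le_pow_iff_left₀ (norm_nonneg _) (mul_nonneg zero_le_two hq0) two_ne_zero).mp ?_
  -- `‖1 + w‖² = 4 - ‖1 - w‖² ≤ 4 - 16 p⁻² ≤ 4 (1 - p⁻²)²`
  nlinarith [sq_nonneg ((p : ℝ)⁻¹ ^ 2)]

theorem norm_sum_cube_stdAddChar_le {ι : Type*} [Fintype ι] [DecidableEq ι] (a : ι → ZMod p)
    {r : ℕ} (hr : r ≤ #{z | a z ≠ 0}) :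
    ‖∑ x : ι → Fin 2, stdAddChar (∑ z, a z * ((x z : ℕ) : ZMod p))‖ ≤
      2 ^ Fintype.card ι * (1 - ((p : ℝ)⁻¹) ^ 2) ^ r := by
  set q : ℝ := 1 - ((p : ℝ)⁻¹) ^ 2
  obtain ⟨hq0, hq1⟩ : q ∈ Set.Icc 0 1 := one_sub_inv_sq_mem_Icc (by exact_mod_cast NeZero.one_le)
  have hfactor : ∀ z, ‖1 + stdAddChar (a z)‖ ≤ 2 * if a z ≠ 0 then q else 1 := by
    intro z
    split_ifs with hz
    · exact norm_one_add_stdAddChar_le hz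
    · exact (norm_add_le _ _).trans (by rw [norm_one, AddChar.norm_apply]; norm_num)
  calc ‖∑ x : ι → Fin 2, stdAddChar (∑ z, a z * ((x z : ℕ) : ZMod p))‖
      = ∏ z, ‖1 + stdAddChar (a z)‖ := by rw [AddChar.sum_cube_apply_linear_eq_prod, norm_prod]
    _ ≤ ∏ z, 2 * if a z ≠ 0 then q else 1 :=
        prod_le_prod (fun _ _ => norm_nonneg _) fun z _ => hfactor z
    _ = 2 ^ Fintype.card ι * q ^ #{z | a z ≠ 0} := by
        rw [prod_mul_distrib, prod_const, card_univ, ← prod_filter, prod_const]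
    _ ≤ 2 ^ Fintype.card ι * q ^ r :=
        mul_le_mul_of_nonneg_left (pow_le_pow_of_le_one hq0 hq1 hr) (by positivity)

end ZMod

namespace AddChar

variable {R X : Type*} [CommRing R] [Fintype R] [DecidableEq R] [Fintype X]
  {ψ : AddChar R ℂ}

theorem card_fiber_mul_card_eq_sum (hψ : ψ.IsPrimitive) (f : X → R) (y : R) :
    (#{x | f x = y} : ℂ) * Fintype.card R = ∑ t, ψ (-(t * y)) * ∑ x, ψ (t * f x) := by
  calc (#{x | f x = y} : ℂ) * Fintype.card R
      = ∑ x, ∑ t, ψ (t * (f x - y)) := by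
        simp only [sum_mulShift _ hψ, sub_eq_zero, Nat.cast_ite, Nat.cast_zero]
        rw [← sum_filter, sum_const, nsmul_eq_mul]
    _ = ∑ t, ψ (-(t * y)) * ∑ x, ψ (t * f x) := by
        rw [sum_comm]
        simp_rw [mul_sum, ← map_add_eq_mul, neg_add_eq_sub, mul_sub]

theorem abs_card_fiber_div_sub_le (hψ : ψ.IsPrimitive) [Nonempty X] (f : X → R) (y : R)
    {B : ℝ} (hB0 : 0 ≤ B) (hB : ∀ t ≠ 0, ‖∑ x, ψ (t * f x)‖ ≤ Fintype.card X * B) :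
    |(#{x | f x = y} : ℝ) / Fintype.card X - 1 / Fintype.card R| ≤ B := by
  have hX : (0 : ℝ) < Fintype.card X := by exact_mod_cast Fintype.card_pos
  have hR : (0 : ℝ) < Fintype.card R := by exact_mod_cast Fintype.card_pos
  have hsplit : (#{x | f x = y} : ℂ) * Fintype.card R - Fintype.card X =
      ∑ t ∈ univ.erase 0, ψ (-(t * y)) * ∑ x, ψ (t * f x) := by
    rw [card_fiber_mul_card_eq_sum hψ, ← add_sum_erase _ _ (mem_univ 0)]
    simp
  have hbound : ‖(#{x | f x = y} : ℂ) * Fintype.card R - Fintype.card X‖ ≤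
      Fintype.card R * (Fintype.card X * B) := by
    rw [hsplit]
    refine (norm_sum_le _ _).trans ?_
    calc ∑ t ∈ univ.erase 0, ‖ψ (-(t * y)) * ∑ x, ψ (t * f x)‖
        ≤ ∑ t ∈ univ.erase (0 : R), (Fintype.card X * B) := by
          refine sum_le_sum fun t ht => ?_
          rw [norm_mul, AddChar.norm_apply, one_mul]
          exact hB t (ne_of_mem_erase ht)
      _ ≤ ∑ t : R, (Fintype.card X * B) :=
          sum_le_sum_of_subset_of_nonneg (erase_subset _ _) fun _ _ _ => by positivity
      _ = Fintype.card R * (Fintype.card X * B) := by simp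
  have hreal : (#{x | f x = y} : ℂ) * Fintype.card R - Fintype.card X =
      ((#{x | f x = y} * Fintype.card R - Fintype.card X : ℝ) : ℂ) := by push_cast; rfl
  rw [hreal, Complex.norm_real, Real.norm_eq_abs] at hbound
  rw [div_sub_div _ _ hX.ne' hR.ne', mul_one, abs_div,
    abs_of_pos (a := (Fintype.card X : ℝ) * Fintype.card R) (by positivity),
    div_le_iff₀ (by positivity)]
  linarith

end AddChar

open Complex in
theorem stmt_5_general (p : ℕ) (hp : p.Prime) (n : ℕ) (r : ℕ)
    (a : Fin n → ZMod p)
    (hsupp : r ≤ (Finset.univ.filter fun z : Fin n => a z ≠ 0).card) :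
    ‖(∑ x : Fin n → Fin 2,
        Complex.exp (2 * Real.pi * I *
          ((∑ z, a z * ((x z : ℕ) : ZMod p)).val : ℝ) / p)) / 2 ^ n‖ ≤
      (1 - ((p : ℝ)⁻¹) ^ 2) ^ ((r : ℝ) / 2) ∧
    ∀ y : ZMod p,
      |((Finset.univ.filter fun x : Fin n → Fin 2 =>
          ∑ z, a z * ((x z : ℕ) : ZMod p) = y).card : ℝ) / 2 ^ n - 1 / p| ≤
        (1 - ((p : ℝ)⁻¹) ^ 2) ^ (r : ℕ) := by
  have : Fact p.Prime := ⟨hp⟩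
  set q : ℝ := 1 - ((p : ℝ)⁻¹) ^ 2
  obtain ⟨hq0, hq1⟩ : q ∈ Set.Icc 0 1 := one_sub_inv_sq_mem_Icc (by exact_mod_cast hp.one_le)
  have hcube : (Fintype.card (Fin n → Fin 2) : ℝ) = 2 ^ n := by simp
  have hbound : ∀ t ≠ (0 : ZMod p), ‖∑ x : Fin n → Fin 2,
      ZMod.stdAddChar (t * ∑ z, a z * ((x z : ℕ) : ZMod p))‖ ≤ 2 ^ n * q ^ r := by
    intro t ht
    simp_rw [Finset.mul_sum, ← mul_assoc]
    refine (ZMod.norm_sum_cube_stdAddChar_le _ ?_).trans_eq (by rw [Fintype.card_fin])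
    simpa [ht] using hsupp
  constructor
  · calc _ = ‖∑ x : Fin n → Fin 2,
            ZMod.stdAddChar (1 * ∑ z, a z * ((x z : ℕ) : ZMod p))‖ / 2 ^ n := by
          simp only [one_mul, ZMod.stdAddChar_apply, ZMod.toCircle_apply, ofReal_natCast,
            norm_div, norm_pow, Complex.norm_ofNat]
      _ ≤ q ^ r := by
          rw [div_le_iff₀ (by positivity), mul_comm]
          exact hbound 1 one_ne_zero
      _ = q ^ (r : ℝ) := (Real.rpow_natCast q r).symm
      _ ≤ q ^ ((r : ℝ) / 2) :=
          rpow_le_rpow_of_exponent_ge' hq0 hq1 (by positivity) (half_le_self (Nat.cast_nonneg r))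
  · intro y
    simpa [hcube, ZMod.card] using
      AddChar.abs_card_fiber_div_sub_le (ZMod.isPrimitive_stdAddChar p)
        (fun x : Fin n → Fin 2 => ∑ z, a z * ((x z : ℕ) : ZMod p)) y (pow_nonneg hq0 r)
        fun t ht => hcube ▸ hbound t ht

open Complex in
/-- If a mod-`p` linear form `φ(x) = ∑ a_z x_z` has support of size at least
`r`, then `|E_{x ∈ {0,1}^n} ω_p^{φ(x)}| ≤ (1 − p^{−2})^{r/2}`, and consequently
`|P[φ(x) = y] − 1/p| ≤ (1 − p^{−2})^r` for every `y ∈ F_p`. -/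
theorem stmt_5 (p : ℕ) (hp : p.Prime) (n : ℕ) (hn : 1 ≤ n) (r : ℕ)
    (a : Fin n → ZMod p)
    (hsupp : r ≤ (Finset.univ.filter fun z : Fin n => a z ≠ 0).card) :
    ‖(∑ x : Fin n → Fin 2,
        Complex.exp (2 * Real.pi * I *
          ((∑ z, a z * ((x z : ℕ) : ZMod p)).val : ℝ) / p)) / 2 ^ n‖ ≤
      (1 - ((p : ℝ)⁻¹) ^ 2) ^ ((r : ℝ) / 2) ∧
    ∀ y : ZMod p,
      |((Finset.univ.filter fun x : Fin n → Fin 2 =>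
          ∑ z, a z * ((x z : ℕ) : ZMod p) = y).card : ℝ) / 2 ^ n - 1 / p| ≤
        (1 - ((p : ℝ)⁻¹) ^ 2) ^ (r : ℕ) :=
  stmt_5_general p hp n r a hsupp
end

section
/- Let p be a prime, let φ : F_p^n → F_p be a nonzero linear form, and let A = {x ∈ {0,1}^n : φ(x) = 0}. If A is nonempty, then |A| ≥ 2^{n−(p−1)}, i.e. A has density at least 2^{−(p−1)} in {0,1}^n. -/
/-!
Write `φ x = ∑ i, x i * c i`. If at most `p - 1` of the weights `c i` are nonzero, every `x`
vanishing on their support is a zero of `φ`. Otherwise fix a set `S` of `p - 1` indices with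
nonzero weight: adding one summand at a time, Cauchy–Davenport shows that the subset sums of
`(c i)_{i ∈ S}` exhaust `ZMod p`, so every choice of the coordinates outside `S` extends to a
zero of `φ` in the cube. Either way the zeros surject onto `{0,1}^(n - |S|)` with `|S| ≤ p - 1`.
-/

open Finset
open scoped Pointwise

section SubsetSums

variable {ι M : Type*} [AddCommMonoid M] [DecidableEq M]

def subsetSums (S : Finset ι) (c : ι → M) : Finset M :=
  S.powerset.image fun B => ∑ i ∈ B, c i

theorem mem_subsetSums {S : Finset ι} {c : ι → M} {y : M} :
    y ∈ subsetSums S c ↔ ∃ B ⊆ S, ∑ i ∈ B, c i = y := by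
  simp [subsetSums]

theorem zero_mem_subsetSums (S : Finset ι) (c : ι → M) : 0 ∈ subsetSums S c :=
  mem_subsetSums.2 ⟨∅, empty_subset S, sum_empty⟩

theorem pair_add_subsetSums_subset [DecidableEq ι] {a : ι} {s : Finset ι} (ha : a ∉ s)
    (c : ι → M) : ({0, c a} : Finset M) + subsetSums s c ⊆ subsetSums (cons a s ha) c := by
  intro y hy
  obtain ⟨u, hu, v, hv, rfl⟩ := mem_add.1 hy
  obtain ⟨B, hBs, rfl⟩ := mem_subsetSums.1 hv
  refine mem_subsetSums.2 ?_
  rcases mem_insert.1 hu with rfl | hu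
  · exact ⟨B, hBs.trans (subset_cons ha), (zero_add _).symm⟩
  · rw [mem_singleton.1 hu, cons_eq_insert]
    exact ⟨insert a B, insert_subset_insert a hBs, sum_insert fun h => ha (hBs h)⟩

end SubsetSums

theorem pow_card_le_card_filter_mul_of_forall_exists_eqOn {ι α : Type*} [Fintype ι]
    [DecidableEq ι] [Fintype α] [Nonempty α] (P : (ι → α) → Prop) [DecidablePred P]
    (S : Finset ι)
    (h : ∀ g : ι → α, ∃ x, P x ∧ Set.EqOn x g (↑S)ᶜ) :
    Fintype.card α ^ Fintype.card ι ≤ #{x | P x} * Fintype.card α ^ #S := by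
  have hsurj : Set.SurjOn (fun (x : ι → α) (i : {i // i ∉ S}) => x i) ↑(univ.filter P)
      (↑(univ : Finset ({i // i ∉ S} → α))) := by
    intro r _
    obtain ⟨x, hPx, hx⟩ :=
      h fun i => if hi : i ∈ S then Classical.arbitrary α else r ⟨i, hi⟩
    exact ⟨x, mem_filter.2 ⟨mem_univ x, hPx⟩, funext fun i => (hx i.2).trans (dif_neg i.2)⟩
  have hcard := card_le_card_of_surjOn _ hsurj
  rw [card_univ, Fintype.card_fun, Fintype.card_subtype_compl, Fintype.card_coe] at hcard
  calc Fintype.card α ^ Fintype.card ι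
      = Fintype.card α ^ (Fintype.card ι - #S) * Fintype.card α ^ #S := by
        rw [← pow_add, Nat.sub_add_cancel (card_le_univ S)]
    _ ≤ _ := Nat.mul_le_mul_right _ hcard

theorem sum_piecewise_one_mul {ι R : Type*} [Fintype ι] [DecidableEq ι] [Semiring R]
    {B : Finset ι} {g : ι → Fin 2} (hg : ∀ i ∈ B, g i = 0) (c : ι → R) :
    ∑ i, ((B.piecewise (1 : ι → Fin 2) g i : ℕ) : R) * c i =
      ∑ i ∈ B, c i + ∑ i, ((g i : ℕ) : R) * c i := by
  rw [← univ_inter B, ← sum_ite_mem univ B c, ← sum_add_distrib]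
  refine sum_congr rfl fun i _ => ?_
  by_cases hi : i ∈ B <;> simp [hi, hg]

namespace ZMod

variable {ι : Type*} {p : ℕ}

theorem min_le_card_subsetSums (hp : p.Prime) {S : Finset ι} {c : ι → ZMod p}
    (hc : ∀ i ∈ S, c i ≠ 0) : min p (#S + 1) ≤ #(subsetSums S c) := by
  classical
  induction S using Finset.cons_induction with
  | empty => exact (min_le_right _ _).trans (card_pos.2 ⟨0, zero_mem_subsetSums ∅ c⟩)
  | cons a s ha ih =>
    have hpair : #({0, c a} : Finset (ZMod p)) = 2 :=
      card_pair (hc a (mem_cons_self a s)).symm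
    have hcd := cauchy_davenport hp (insert_nonempty 0 {c a}) ⟨0, zero_mem_subsetSums s c⟩
    have hih := ih fun i hi => hc i (mem_cons_of_mem hi)
    have hsub := card_le_card (pair_add_subsetSums_subset ha c)
    rw [card_cons]
    omega

theorem mem_subsetSums_of_le_card (hp : p.Prime) {S : Finset ι} {c : ι → ZMod p}
    (hc : ∀ i ∈ S, c i ≠ 0) (hS : p - 1 ≤ #S) (y : ZMod p) : y ∈ subsetSums S c := by
  have : NeZero p := ⟨hp.ne_zero⟩
  suffices subsetSums S c = univ from this ▸ mem_univ y
  refine eq_univ_of_card _ (le_antisymm (card_le_univ _) ?_)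
  have := min_le_card_subsetSums hp hc
  rw [ZMod.card]
  omega

theorem exists_card_le_forall_exists_eqOn_sum_eq_zero [Fintype ι] [DecidableEq ι]
    (hp : p.Prime) (c : ι → ZMod p) :
    ∃ S : Finset ι, #S ≤ p - 1 ∧ ∀ g : ι → Fin 2, ∃ x : ι → Fin 2,
      ∑ i, ((x i : ℕ) : ZMod p) * c i = 0 ∧ Set.EqOn x g (↑S)ᶜ := by
  set T : Finset ι := {i | c i ≠ 0}
  by_cases hT : #T ≤ p - 1
  · refine ⟨T, hT, fun g => ⟨T.piecewise (0 : ι → Fin 2) g, sum_eq_zero fun i _ => ?_,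
      fun i hi => T.piecewise_eq_of_notMem _ _ hi⟩⟩
    by_cases hi : i ∈ T
    · simp [hi]
    · have hc : c i = 0 := by simpa [T] using hi
      simp [hc]
  obtain ⟨S, hST, hS⟩ := exists_subset_card_eq (show p - 1 ≤ #T by omega)
  refine ⟨S, hS.le, fun g => ?_⟩
  set g' := S.piecewise (0 : ι → Fin 2) g
  have hg' : ∀ i ∈ S, g' i = 0 := fun i hi => S.piecewise_eq_of_mem _ _ hi
  obtain ⟨B, hBS, hB⟩ := mem_subsetSums.1 <| mem_subsetSums_of_le_card hp
    (fun i hi => (mem_filter.1 (hST hi)).2) hS.ge (-∑ i, ((g' i : ℕ) : ZMod p) * c i)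
  refine ⟨B.piecewise (1 : ι → Fin 2) g', ?_, fun i hi => ?_⟩
  · rw [sum_piecewise_one_mul (fun i hi => hg' i (hBS hi)), hB, neg_add_cancel]
  · rw [B.piecewise_eq_of_notMem _ _ fun h => hi (hBS h)]
    exact S.piecewise_eq_of_notMem _ _ hi

end ZMod

theorem stmt_6_general (p : ℕ) (hp : p.Prime) (n : ℕ)
    (φ : (Fin n → ZMod p) →ₗ[ZMod p] ZMod p)
    (A : Finset (Fin n → Fin 2))
    (hA : A = Finset.univ.filter fun x : Fin n → Fin 2 =>
      φ (fun z => ((x z : ℕ) : ZMod p)) = 0) :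
    (A.card : ℝ) ≥ (2 : ℝ) ^ n / 2 ^ (p - 1) := by
  classical
  obtain ⟨S, hSp, hS⟩ :=
    ZMod.exists_card_le_forall_exists_eqOn_sum_eq_zero hp fun i =>
      φ fun j => if i = j then 1 else 0
  have hφ (x : Fin n → Fin 2) : φ (fun z => ((x z : ℕ) : ZMod p)) =
      ∑ i, ((x i : ℕ) : ZMod p) * φ fun j => if i = j then 1 else 0 :=
    φ.pi_apply_eq_sum_univ _
  have hcount := pow_card_le_card_filter_mul_of_forall_exists_eqOn
    (fun x : Fin n → Fin 2 => φ (fun z => ((x z : ℕ) : ZMod p)) = 0) S fun g => by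
      simpa only [hφ] using hS g
  rw [← hA, Fintype.card_fin, Fintype.card_fin] at hcount
  rw [ge_iff_le, div_le_iff₀ (by positivity)]
  calc (2 : ℝ) ^ n ≤ A.card * 2 ^ S.card := by exact_mod_cast hcount
    _ ≤ A.card * 2 ^ (p - 1) := by gcongr; norm_num

/-- If `φ : F_p^n → F_p` is a nonzero linear form and
`A = {x ∈ {0,1}^n : φ(x) = 0}` is nonempty, then `|A| ≥ 2^{n−(p−1)}`, i.e.
`A` has density at least `2^{−(p−1)}` in the cube. -/
theorem stmt_6 (p : ℕ) (hp : p.Prime) (n : ℕ)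
    (φ : (Fin n → ZMod p) →ₗ[ZMod p] ZMod p) (hφ : φ ≠ 0)
    (A : Finset (Fin n → Fin 2))
    (hA : A = Finset.univ.filter fun x : Fin n → Fin 2 =>
      φ (fun z => ((x z : ℕ) : ZMod p)) = 0)
    (hne : A.Nonempty) :
    (A.card : ℝ) ≥ (2 : ℝ) ^ n / 2 ^ (p - 1) :=
  stmt_6_general p hp n φ A hA
end

section
/- Let p ≥ 3 be a prime, n ≥ p, and let Z_1, Z_2 be disjoint subsets of [n] each of size (p−1)/2. Identify x ∈ {0,1}^n with the set A = {i : x_i = 1}, let A_1 = {A ⊆ [n] : A ∩ Z_1 = ∅} and A_2 = {A ⊆ [n] : A ∩ Z_2 = ∅}, and let φ : F_p^n → F_p be the linear form φ(A) = |A ∩ Z_1| − |A ∩ Z_2| mod p. Then the correlation cor_{A_1, A_2}(φ) = (Σ_{d ∈ F_p} P_{A_1}[φ = d]·P_{A_2}[φ = d]) − 1/p equals 2^{−(p−1)} − 1/p, which is strictly negative. -/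
/-!
On `A₁` the form is minus the number of ones of `x` on `Z₂`, and on `A₂` it is the number of
ones of `y` on `Z₁`. Both counts are at most `(p - 1) / 2`, so their sum stays below `p` and the
two distributions of the form meet only in the value `0`. The sum over `d` therefore reduces to
`P_{A₁}[x = 0 on Z₂] · P_{A₂}[y = 0 on Z₁] = 2^{-(p-1)/2} · 2^{-(p-1)/2}`.
-/

open Finset

section VanishingSets

variable {ι : Type*} [Fintype ι] [DecidableEq ι] {k : ℕ} [NeZero k]

lemma card_filter_forall_mem_eq_zero (S : Finset ι)
    [DecidablePred fun x : ι → Fin k => ∀ i ∈ S, x i = 0] :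
    #{x : ι → Fin k | ∀ i ∈ S, x i = 0} = k ^ (Fintype.card ι - #S) := by
  have hpi : ({x : ι → Fin k | ∀ i ∈ S, x i = 0} : Finset _)
      = Fintype.piFinset fun i => if i ∈ S then {0} else univ := by
    ext x
    simp only [mem_filter, mem_univ, true_and, Fintype.mem_piFinset]
    refine ⟨fun h i => ?_, fun h i hi => by simpa [hi] using h i⟩
    by_cases hi : i ∈ S <;> simp [hi, h i]
  simp only [hpi, Fintype.card_piFinset, apply_ite Finset.card, card_singleton, card_univ]
  rw [prod_ite, prod_const, prod_const, one_pow, one_mul, filter_not,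
    card_sdiff_of_subset (filter_subset _ _), filter_mem_eq_inter, univ_inter, card_univ,
    Fintype.card_fin]

lemma card_filter_forall_mem_union_div (S T : Finset ι) (hST : Disjoint S T)
    [DecidablePred fun x : ι → Fin k => ∀ i ∈ S, x i = 0]
    [DecidablePred fun x : ι → Fin k => ∀ i ∈ S ∪ T, x i = 0] :
    (#{x : ι → Fin k | ∀ i ∈ S ∪ T, x i = 0} : ℝ) /
        #{x : ι → Fin k | ∀ i ∈ S, x i = 0}
      = 1 / k ^ #T := by
  have hk : (k : ℝ) ≠ 0 := by exact_mod_cast NeZero.ne k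
  have hcard : #S + #T ≤ Fintype.card ι := by
    rw [← card_union_of_disjoint hST]; exact card_le_univ _
  rw [card_filter_forall_mem_eq_zero, card_filter_forall_mem_eq_zero,
    card_union_of_disjoint hST,
    show Fintype.card ι - #S = Fintype.card ι - (#S + #T) + #T by omega]
  push_cast
  rw [pow_add]
  field_simp

end VanishingSets

section BinaryWeights

variable {ι : Type*}

lemma sum_val_le_card (Z : Finset ι) (x : ι → Fin 2) : ∑ i ∈ Z, (x i : ℕ) ≤ #Z := by
  calc ∑ i ∈ Z, (x i : ℕ) ≤ ∑ _i ∈ Z, 1 := sum_le_sum fun i _ => Fin.is_le (x i)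
    _ = #Z := by rw [sum_const, smul_eq_mul, mul_one]

lemma sum_val_eq_zero_iff (Z : Finset ι) (x : ι → Fin 2) :
    ∑ i ∈ Z, (x i : ℕ) = 0 ↔ ∀ i ∈ Z, x i = 0 := by
  rw [sum_eq_zero_iff]
  exact forall₂_congr fun i _ => Fin.val_eq_zero_iff

lemma natCast_eq_zero_iff_of_lt {a p : ℕ} (h : a < p) : (a : ZMod p) = 0 ↔ a = 0 :=
  ⟨fun h0 => Nat.eq_zero_of_dvd_of_lt ((ZMod.natCast_eq_zero_iff a p).mp h0) h,
    fun h0 => by rw [h0, Nat.cast_zero]⟩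

lemma sum_natCast_val_eq_zero_iff {p : ℕ} (Z : Finset ι) (x : ι → Fin 2) (hZ : #Z < p) :
    ∑ i ∈ Z, ((x i : ℕ) : ZMod p) = 0 ↔ ∀ i ∈ Z, x i = 0 := by
  rw [← Nat.cast_sum, natCast_eq_zero_iff_of_lt ((sum_val_le_card Z x).trans_lt hZ),
    sum_val_eq_zero_iff]

lemma sum_natCast_val_add_sum_natCast_val_eq_zero_iff {p : ℕ} (Z W : Finset ι)
    (x y : ι → Fin 2) (hZW : #Z + #W < p) :
    ∑ i ∈ Z, ((x i : ℕ) : ZMod p) + ∑ i ∈ W, ((y i : ℕ) : ZMod p) = 0 ↔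
      (∀ i ∈ Z, x i = 0) ∧ ∀ i ∈ W, y i = 0 := by
  have hlt : ∑ i ∈ Z, (x i : ℕ) + ∑ i ∈ W, (y i : ℕ) < p :=
    (add_le_add (sum_val_le_card Z x) (sum_val_le_card W y)).trans_lt hZW
  rw [← Nat.cast_sum, ← Nat.cast_sum, ← Nat.cast_add, natCast_eq_zero_iff_of_lt hlt,
    Nat.add_eq_zero_iff, sum_val_eq_zero_iff, sum_val_eq_zero_iff]

end BinaryWeights

lemma sum_div_mul_div_card_filter_eq_single {α β : Type*} [Fintype β] [DecidableEq β]
    (A₁ A₂ : Finset α) (f : α → β) (b : β)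
    (h : ∀ x ∈ A₁, ∀ y ∈ A₂, f x = f y → f x = b)
    (c₁ c₂ : ℝ) :
    ∑ d, ((#{x ∈ A₁ | f x = d} : ℝ) / c₁) * ((#{x ∈ A₂ | f x = d} : ℝ) / c₂)
      = ((#{x ∈ A₁ | f x = b} : ℝ) / c₁) * ((#{x ∈ A₂ | f x = b} : ℝ) / c₂) := by
  refine sum_eq_single b (fun d _ hdb => ?_) (by simp)
  obtain h₁ | ⟨x, hx⟩ := (filter (f · = d) A₁).eq_empty_or_nonempty
  · rw [h₁, card_empty, Nat.cast_zero, zero_div, zero_mul]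
  obtain h₂ | ⟨y, hy⟩ := (filter (f · = d) A₂).eq_empty_or_nonempty
  · rw [h₂, card_empty, Nat.cast_zero, zero_div, mul_zero]
  rw [mem_filter] at hx hy
  exact absurd (hx.2 ▸ h x hx.1 y hy.1 (hx.2.trans hy.2.symm)) hdb

lemma lt_two_pow_sub_one {k : ℕ} (hk : 3 ≤ k) : k < 2 ^ (k - 1) := by
  induction k, hk using Nat.le_induction with
  | base => norm_num
  | succ k hk ih =>
    rw [Nat.add_sub_cancel, show k = k - 1 + 1 by omega, pow_succ]
    omega

theorem stmt_8_general (p : ℕ) [NeZero p] (hp : p.Prime) (hp3 : 3 ≤ p) (n : ℕ)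
    (Z₁ Z₂ : Finset (Fin n)) (hdisj : Disjoint Z₁ Z₂)
    (hZ₁ : Z₁.card = (p - 1) / 2) (hZ₂ : Z₂.card = (p - 1) / 2)
    (A₁ A₂ : Finset (Fin n → Fin 2))
    (hA₁ : A₁ = Finset.univ.filter fun x => ∀ i ∈ Z₁, x i = 0)
    (hA₂ : A₂ = Finset.univ.filter fun x => ∀ i ∈ Z₂, x i = 0)
    (φ : (Fin n → Fin 2) → ZMod p)
    (hφ : ∀ x, φ x = ∑ i ∈ Z₁, ((x i : ℕ) : ZMod p)
      - ∑ i ∈ Z₂, ((x i : ℕ) : ZMod p)) :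
    (∑ d : ZMod p,
        (((A₁.filter fun x => φ x = d).card : ℝ) / A₁.card) *
        (((A₂.filter fun x => φ x = d).card : ℝ) / A₂.card)) - 1 / p
      = 1 / 2 ^ (p - 1) - 1 / p ∧
    (1 : ℝ) / 2 ^ (p - 1) - 1 / p < 0 := by
  set m := (p - 1) / 2
  have hpm : 2 * m + 1 = p := by
    have := Nat.two_mul_div_two_add_one_of_odd (hp.odd_of_ne_two (by omega)); omega
  have hφ₁ : ∀ x ∈ A₁, φ x = -∑ i ∈ Z₂, ((x i : ℕ) : ZMod p) := fun x hx => by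
    rw [hA₁, mem_filter] at hx
    rw [hφ x, sum_eq_zero (s := Z₁) fun i hi => by rw [hx.2 i hi, Fin.val_zero, Nat.cast_zero],
      zero_sub]
  have hφ₂ : ∀ y ∈ A₂, φ y = ∑ i ∈ Z₁, ((y i : ℕ) : ZMod p) := fun y hy => by
    rw [hA₂, mem_filter] at hy
    rw [hφ y, sum_eq_zero (s := Z₂) fun i hi => by rw [hy.2 i hi, Fin.val_zero, Nat.cast_zero],
      sub_zero]
  have hcommon : ∀ x ∈ A₁, ∀ y ∈ A₂, φ x = φ y → φ x = 0 := fun x hx y hy hxy => by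
    rw [hφ₁ x hx, hφ₂ y hy, neg_eq_iff_add_eq_zero,
      sum_natCast_val_add_sum_natCast_val_eq_zero_iff _ _ _ _ (by omega)] at hxy
    rw [hφ₁ x hx, (sum_natCast_val_eq_zero_iff _ _ (by omega)).mpr hxy.1, neg_zero]
  have hfiber₁ :
      A₁.filter (φ · = 0) = univ.filter fun x => ∀ i ∈ Z₁ ∪ Z₂, x i = 0 := by
    ext x
    have hA : x ∈ A₁ ↔ x ∈ univ ∧ ∀ i ∈ Z₁, x i = 0 := by rw [hA₁, mem_filter]
    rw [mem_filter, mem_filter, forall_mem_union, ← and_assoc, ← hA]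
    exact and_congr_right fun hx => by
      rw [hφ₁ x hx, neg_eq_zero, sum_natCast_val_eq_zero_iff _ _ (by omega)]
  have hfiber₂ :
      A₂.filter (φ · = 0) = univ.filter fun y => ∀ i ∈ Z₂ ∪ Z₁, y i = 0 := by
    ext y
    have hA : y ∈ A₂ ↔ y ∈ univ ∧ ∀ i ∈ Z₂, y i = 0 := by rw [hA₂, mem_filter]
    rw [mem_filter, mem_filter, forall_mem_union, ← and_assoc, ← hA]
    exact and_congr_right fun hy => by rw [hφ₂ y hy, sum_natCast_val_eq_zero_iff _ _ (by omega)]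
  rw [sum_div_mul_div_card_filter_eq_single _ _ φ 0 hcommon, hfiber₁, hfiber₂, hA₁, hA₂,
    card_filter_forall_mem_union_div _ _ hdisj, card_filter_forall_mem_union_div _ _ hdisj.symm,
    hZ₁, hZ₂, one_div_mul_one_div, ← pow_add, show m + m = p - 1 by omega, Nat.cast_ofNat]
  exact ⟨rfl, sub_neg.mpr (one_div_lt_one_div_of_lt (by positivity)
    (by exact_mod_cast lt_two_pow_sub_one hp3))⟩

/-- For `p ≥ 3` prime and disjoint `Z_1, Z_2 ⊆ [n]` of size `(p−1)/2`, with
`A_t = {x ∈ {0,1}^n : x_i = 0 ∀ i ∈ Z_t}` and `φ(x) = |x ∩ Z_1| − |x ∩ Z_2|`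
mod `p`, the correlation `∑_d P_{A_1}[φ=d]·P_{A_2}[φ=d] − 1/p` equals
`2^{−(p−1)} − 1/p`, which is negative. -/
theorem stmt_8 (p : ℕ) [NeZero p] (hp : p.Prime) (hp3 : 3 ≤ p) (n : ℕ) (hn : p ≤ n)
    (Z₁ Z₂ : Finset (Fin n)) (hdisj : Disjoint Z₁ Z₂)
    (hZ₁ : Z₁.card = (p - 1) / 2) (hZ₂ : Z₂.card = (p - 1) / 2)
    (A₁ A₂ : Finset (Fin n → Fin 2))
    (hA₁ : A₁ = Finset.univ.filter fun x => ∀ i ∈ Z₁, x i = 0)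
    (hA₂ : A₂ = Finset.univ.filter fun x => ∀ i ∈ Z₂, x i = 0)
    (φ : (Fin n → Fin 2) → ZMod p)
    (hφ : ∀ x, φ x = ∑ i ∈ Z₁, ((x i : ℕ) : ZMod p)
      - ∑ i ∈ Z₂, ((x i : ℕ) : ZMod p)) :
    (∑ d : ZMod p,
        (((A₁.filter fun x => φ x = d).card : ℝ) / A₁.card) *
        (((A₂.filter fun x => φ x = d).card : ℝ) / A₂.card)) - 1 / p
      = 1 / 2 ^ (p - 1) - 1 / p ∧
    (1 : ℝ) / 2 ^ (p - 1) - 1 / p < 0 :=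
  stmt_8_general p hp hp3 n Z₁ Z₂ hdisj hZ₁ hZ₂ A₁ A₂ hA₁ hA₂ φ hφ
end

section
/- There exists η_0 > 0 (depending on the finite set D) such that for every random variable X with values in D and negentropy J(X) = log|D| − H(X) ≤ η < η_0, one has Σ_{x∈D} (P[X=x] − 1/|D|)^2 ≤ (8/|D|)·J(X); in particular |P[X=x] − 1/|D|| ≤ (8η/|D|)^{1/2} for every x ∈ D. -/
/-!
With `n = |D|` and `klFun x = x log x + 1 - x ≥ 0`, the negentropy is `J = n⁻¹ ∑ₓ klFun (n P x)`.
Since `klFun` increases on `[1, ∞)`, `J < klFun 2 / n` forces `n P x ≤ 2` for every `x`. On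
`[0, 2]` the function `klFun x - (x - 1)² / 4` vanishes at `1`, and its derivative
`log x - (x - 1) / 2` is `≤ 0` left of `1` and `≥ 0` right of `1`, so `klFun x ≥ (x - 1)² / 4`.
Summing gives `∑ₓ (P x - 1/n)² ≤ 4 J / n`.
-/

open Real InformationTheory Set Finset

namespace InformationTheory

lemma monotoneOn_klFun : MonotoneOn klFun (Ici 1) := by
  refine monotoneOn_of_deriv_nonneg (convex_Ici 1) continuous_klFun.continuousOn
    (fun x hx ↦ ?_) (fun x hx ↦ ?_) <;> rw [interior_Ici, Set.mem_Ioi] at hx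
  · exact (hasDerivAt_klFun (by linarith)).differentiableAt.differentiableWithinAt
  · simpa only [deriv_klFun] using log_nonneg hx.le

lemma le_two_of_klFun_lt_klFun_two {x : ℝ} (h : klFun x < klFun 2) : x ≤ 2 := by
  rcases le_or_gt x 1 with hx | hx
  · linarith
  · exact (monotoneOn_klFun.reflect_lt (mem_Ici.2 hx.le) (mem_Ici.2 one_le_two) h).le

lemma klFun_two_pos : 0 < klFun 2 :=
  (klFun_nonneg zero_le_two).lt_of_ne' fun h ↦ by norm_num [klFun_eq_zero_iff] at h

lemma hasDerivAt_klFun_sub_sq {x : ℝ} (hx : x ≠ 0) :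
    HasDerivAt (fun y ↦ klFun y - (y - 1) ^ 2 / 4) (log x - (x - 1) / 2) x :=
  ((hasDerivAt_klFun hx).fun_sub
    ((((hasDerivAt_id x).sub_const 1).fun_pow 2).div_const 4)).congr_deriv
      (by simp only [id, Nat.cast_ofNat]; ring)

lemma sq_sub_one_div_four_le_klFun {x : ℝ} (h0 : 0 ≤ x) (h2 : x ≤ 2) :
    (x - 1) ^ 2 / 4 ≤ klFun x := by
  set g : ℝ → ℝ := fun y ↦ klFun y - (y - 1) ^ 2 / 4
  have hg : Continuous g := by fun_prop
  suffices g 1 ≤ g x by simpa [g, klFun_one] using this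
  rcases le_total x 1 with hx1 | hx1
  · refine antitoneOn_of_hasDerivWithinAt_nonpos (convex_Icc x 1) hg.continuousOn
      (f' := fun y ↦ log y - (y - 1) / 2) (fun y hy ↦ ?_) (fun y hy ↦ ?_)
      ⟨le_rfl, hx1⟩ ⟨hx1, le_rfl⟩ hx1
    all_goals obtain ⟨hxy, hy1⟩ : x < y ∧ y < 1 := by rwa [interior_Icc] at hy
    · exact (hasDerivAt_klFun_sub_sq (by linarith)).hasDerivWithinAt
    · linarith [log_le_sub_one_of_pos (by linarith : 0 < y)]
  · refine monotoneOn_of_hasDerivWithinAt_nonneg (convex_Icc 1 x) hg.continuousOn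
      (f' := fun y ↦ log y - (y - 1) / 2) (fun y hy ↦ ?_) (fun y hy ↦ ?_)
      ⟨le_rfl, hx1⟩ ⟨hx1, le_rfl⟩ hx1
    all_goals obtain ⟨h1y, hyx⟩ : 1 < y ∧ y < x := by rwa [interior_Icc] at hy
    · exact (hasDerivAt_klFun_sub_sq (by linarith)).hasDerivWithinAt
    · have hy0 : 0 < y := by linarith
      have : (y - 1) / 2 ≤ (y - 1) / y := div_le_div_of_nonneg_left (by linarith) hy0 (by linarith)
      have : (y - 1) / y = 1 - y⁻¹ := by field_simp
      linarith [one_sub_inv_le_log_of_pos hy0]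

noncomputable def negentropy {D : Type*} [Fintype D] (P : D → ℝ) : ℝ :=
  log (Fintype.card D) - (-∑ d, P d * log (P d))

section negentropy

variable {D : Type*} [Fintype D] {P : D → ℝ}

theorem card_mul_negentropy (hP : ∑ d, P d = 1) :
    (Fintype.card D : ℝ) * negentropy P = ∑ d, klFun (Fintype.card D * P d) := by
  set n : ℝ := (Fintype.card D : ℝ)
  have hterm : ∀ d, klFun (n * P d) = n * log n * P d + n * (P d * log (P d)) + 1 - n * P d := by
    intro d
    have := negMulLog_mul n (P d)
    simp only [negMulLog, klFun] at this ⊢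
    linarith
  simp only [hterm, sum_sub_distrib, sum_add_distrib, ← mul_sum, hP, sum_const, card_univ,
    nsmul_eq_mul, negentropy]
  ring

variable [Nonempty D]

theorem klFun_card_mul_le_card_mul_negentropy (hP0 : ∀ d, 0 ≤ P d) (hP : ∑ d, P d = 1)
    (d : D) :
    klFun (Fintype.card D * P d) ≤ Fintype.card D * negentropy P :=
  card_mul_negentropy hP ▸
    single_le_sum (fun e _ ↦ klFun_nonneg (mul_nonneg (by positivity) (hP0 e))) (mem_univ d)

theorem negentropy_nonneg (hP0 : ∀ d, 0 ≤ P d) (hP : ∑ d, P d = 1) : 0 ≤ negentropy P := by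
  refine (mul_nonneg_iff_of_pos_left (by positivity : (0 : ℝ) < Fintype.card D)).1 ?_
  rw [card_mul_negentropy hP]
  exact sum_nonneg fun d _ ↦ klFun_nonneg (mul_nonneg (by positivity) (hP0 d))

theorem sum_sq_sub_inv_card_le (hP0 : ∀ d, 0 ≤ P d) (hP : ∑ d, P d = 1)
    (hP2 : ∀ d, Fintype.card D * P d ≤ 2) :
    ∑ d, (P d - 1 / Fintype.card D) ^ 2 ≤ 4 / Fintype.card D * negentropy P := by
  set n : ℝ := (Fintype.card D : ℝ)
  have hn : 0 < n := by positivity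
  have hterm : ∀ d, n ^ 2 / 4 * (P d - 1 / n) ^ 2 ≤ klFun (n * P d) := fun d ↦ by
    convert sq_sub_one_div_four_le_klFun (mul_nonneg hn.le (hP0 d)) (hP2 d) using 1
    field_simp
  calc ∑ d, (P d - 1 / n) ^ 2 = 4 / n ^ 2 * (n ^ 2 / 4 * ∑ d, (P d - 1 / n) ^ 2) := by
        rw [← mul_assoc, show 4 / n ^ 2 * (n ^ 2 / 4) = 1 by field_simp, one_mul]
    _ ≤ 4 / n ^ 2 * (n * negentropy P) := by
        rw [mul_sum, card_mul_negentropy hP]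
        gcongr with d
        exact hterm d
    _ = 4 / n * negentropy P := by field_simp

end negentropy

end InformationTheory

/-- There is `η₀ > 0` depending on the finite set `D` such that whenever a
distribution `P` on `D` has negentropy `J(P) ≤ η < η₀`, we have
`∑_x (P x − 1/|D|)² ≤ (8/|D|)·J(P)`, and in particular
`|P x − 1/|D|| ≤ (8η/|D|)^{1/2}` for every `x`. -/
theorem stmt_10 {D : Type*} [Fintype D] [Nonempty D] :
    ∃ η₀ > (0:ℝ), ∀ (P : D → ℝ), (∀ d, 0 ≤ P d) → (∑ d, P d = 1) →
      ∀ η : ℝ, 0 ≤ η → η < η₀ →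
      Real.log (Fintype.card D) - (-∑ d, P d * Real.log (P d)) ≤ η →
      (∑ d, (P d - 1 / Fintype.card D) ^ 2 ≤
        (8 / Fintype.card D) *
          (Real.log (Fintype.card D) - (-∑ d, P d * Real.log (P d))) ∧
       ∀ d, |P d - 1 / Fintype.card D| ≤
          Real.sqrt (8 * η / Fintype.card D)) := by
  have hn : (0 : ℝ) < Fintype.card D := by positivity
  refine ⟨klFun 2 / Fintype.card D, div_pos klFun_two_pos hn, ?_⟩
  intro P hP0 hP η _ hη₀ hJ
  change negentropy P ≤ η at hJ
  change _ ≤ _ * negentropy P ∧ _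
  have hP2 : ∀ d, Fintype.card D * P d ≤ 2 := fun d ↦ le_two_of_klFun_lt_klFun_two <|
    (klFun_card_mul_le_card_mul_negentropy hP0 hP d).trans_lt
      ((lt_div_iff₀' hn).1 (hJ.trans_lt hη₀))
  have hsum : ∑ d, (P d - 1 / Fintype.card D) ^ 2 ≤ 8 / Fintype.card D * negentropy P :=
    (sum_sq_sub_inv_card_le hP0 hP hP2).trans <| by
      gcongr
      · exact negentropy_nonneg hP0 hP
      · norm_num
  refine ⟨hsum, fun d ↦ Real.abs_le_sqrt ?_⟩
  calc (P d - 1 / Fintype.card D) ^ 2 ≤ ∑ e, (P e - 1 / Fintype.card D) ^ 2 :=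
        single_le_sum (fun e _ ↦ sq_nonneg (P e - 1 / Fintype.card D)) (mem_univ d)
    _ ≤ 8 / Fintype.card D * η := hsum.trans (by gcongr)
    _ = 8 * η / Fintype.card D := by ring
end
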